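/- arXiv:2301.03176 — 2 statements merged into one kernel-verified Lean document; each statement's English description precedes it below -/
import Mathlib

section
/- For every real λ with |λ| < 1, one has Σ_{n=1}^∞ T_n(1) = 1 − (λ/(1+λ)) e_λ(1), where the series on the left converges. -/
noncomputable section

/-- Generalized falling factorial `(x)_{n,λ} = x(x-λ)⋯(x-(n-1)λ)`, with `(x)_{0,λ} = 1`. -/
def dff (lam x : ℝ) (n : ℕ) : ℝ := ∏ i ∈ Finset.range n, (x - i * lam)

/-- Degenerate exponential `e_λ(y) = ∑_{n=0}^∞ (1)_{n,λ} y^n / n!`. -/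
def dexp (lam y : ℝ) : ℝ := ∑' n : ℕ, dff lam 1 n * y ^ n / n.factorial

/-- Truncated degenerate exponential tail
`T_n(y) = e_λ(y) - ∑_{k=0}^n (1)_{k,λ} y^k / k!`. -/
def dtail (lam y : ℝ) (n : ℕ) : ℝ :=
  dexp lam y - ∑ k ∈ Finset.range (n + 1), dff lam 1 k * y ^ k / k.factorial

/-!
Write `a_k = (1)_{k,λ} / k!`. The recurrence `(k + 1) a_{k+1} = (1 - kλ) a_k` gives, by the ratio
test, absolute convergence of `∑ k a_k` for `|λ| < 1`, and summing it yields
`S := ∑ k a_k = e_λ(1) - λ S`, so `S = e_λ(1) / (1 + λ)`. Since `T_n(1) = ∑_{k > n} a_k`,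
exchanging the order of summation gives `∑_{n ≥ 0} T_n(1) = ∑ k a_k = S`; it remains to remove
`T_0(1) = e_λ(1) - 1`.
-/

open Finset Filter

theorem hasSum_tsum_nat_add_of_summable_natCast_mul_norm {E : Type*} [NormedAddCommGroup E]
    [CompleteSpace E] {f : ℕ → E} (hf : Summable fun k : ℕ => (k : ℝ) * ‖f k‖) :
    HasSum (fun n => ∑' k, f (n + k + 1)) (∑' k, k • f k) := by
  set g : ℕ × ℕ → E := fun p => f (p.1 + p.2 + 1)
  set e := HasAntidiagonal.sigmaAntidiagonalEquivProd (A := ℕ)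
  have hge : ∀ x : Σ m, antidiagonal m, g (e x) = f (x.1 + 1) := by
    rintro ⟨m, ⟨p, hp⟩⟩
    rw [HasAntidiagonal.mem_antidiagonal] at hp
    simp [g, e, hp]
  have hfiber : ∀ m, HasSum (fun y : antidiagonal m => g (e ⟨m, y⟩)) ((m + 1) • f (m + 1)) := by
    intro m
    simp only [hge]
    convert hasSum_fintype (fun _ : antidiagonal m => f (m + 1))
    simp
  have hg : Summable g := by
    refine Summable.of_norm (e.summable_iff.mp ?_)
    refine (summable_sigma_of_nonneg fun _ => norm_nonneg _).mpr ⟨fun _ => .of_finite, ?_⟩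
    refine ((summable_nat_add_iff 1).mpr hf).congr fun m => ?_
    simp only [hge, tsum_fintype, sum_const, card_univ, Fintype.card_coe,
      Nat.card_antidiagonal, nsmul_eq_mul]
  have hsum : HasSum (fun k => k • f k) (∑' p, g p) := by
    have := ((e.hasSum_iff.mpr hg.hasSum).sigma hfiber)
    simpa using (hasSum_nat_add_iff (f := fun k => k • f k) 1).mp this
  rw [hsum.tsum_eq]
  exact hg.hasSum.prod_fiberwise fun n => (hg.prod_factor n).hasSum

def dexpCoeff (lam : ℝ) (k : ℕ) : ℝ := dff lam 1 k / k.factorial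

lemma succ_mul_dexpCoeff_succ (lam : ℝ) (k : ℕ) :
    ((k : ℝ) + 1) * dexpCoeff lam (k + 1) = (1 - k * lam) * dexpCoeff lam k := by
  simp only [dexpCoeff, dff, prod_range_succ, Nat.factorial_succ, Nat.cast_mul, Nat.cast_succ]
  generalize ∏ i ∈ range k, (1 - i * lam) = P
  field_simp

lemma dexp_one_eq_tsum (lam : ℝ) : dexp lam 1 = ∑' k, dexpCoeff lam k := by
  simp [dexp, dexpCoeff]

section

variable {lam : ℝ} (hl : |lam| < 1)
include hl

lemma summable_natCast_mul_norm_dexpCoeff :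
    Summable fun k : ℕ => (k : ℝ) * ‖dexpCoeff lam k‖ := by
  obtain ⟨r, hlr, hr1⟩ := exists_between hl
  obtain ⟨N, hN⟩ := exists_nat_ge (1 / (r - |lam|))
  refine summable_of_ratio_norm_eventually_le hr1 ?_
  filter_upwards [eventually_ge_atTop N] with k hk
  have hkr : |1 - k * lam| ≤ r * k := by
    have : 1 ≤ (r - |lam|) * k := by
      rw [div_le_iff₀' (by linarith)] at hN
      exact hN.trans (by gcongr)
    calc |1 - k * lam| ≤ 1 + k * |lam| := by
          simpa [abs_mul] using abs_sub (1 : ℝ) (k * lam)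
      _ ≤ r * k := by linarith
  simp only [norm_mul, norm_norm, Real.norm_natCast]
  calc ((k + 1 : ℕ) : ℝ) * ‖dexpCoeff lam (k + 1)‖ = |1 - k * lam| * ‖dexpCoeff lam k‖ := by
        have := congrArg abs (succ_mul_dexpCoeff_succ lam k)
        rw [abs_mul, abs_mul, abs_of_pos k.cast_add_one_pos] at this
        simpa [Real.norm_eq_abs] using this
    _ ≤ r * (k * ‖dexpCoeff lam k‖) := by
        rw [← mul_assoc]; gcongr

lemma summable_dexpCoeff : Summable (dexpCoeff lam) := by
  refine Summable.of_norm ((summable_nat_add_iff 1).mp ?_)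
  refine ((summable_nat_add_iff 1).mpr (summable_natCast_mul_norm_dexpCoeff hl)).of_nonneg_of_le
    (fun _ => norm_nonneg _) fun k => ?_
  push_cast
  exact le_mul_of_one_le_left (norm_nonneg _) (by linarith [k.cast_nonneg (α := ℝ)])

lemma hasSum_dexpCoeff : HasSum (dexpCoeff lam) (dexp lam 1) := by
  rw [dexp_one_eq_tsum]
  exact (summable_dexpCoeff hl).hasSum

lemma hasSum_natCast_mul_dexpCoeff :
    HasSum (fun k : ℕ => k * dexpCoeff lam k) (dexp lam 1 / (1 + lam)) := by
  have hS : Summable fun k : ℕ => k * dexpCoeff lam k :=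
    .of_norm (by simpa using summable_natCast_mul_norm_dexpCoeff hl)
  set S := ∑' k : ℕ, k * dexpCoeff lam k
  have hshift : HasSum (fun k : ℕ => ((k : ℝ) + 1) * dexpCoeff lam (k + 1)) S := by
    simpa using (hasSum_nat_add_iff' (f := fun k : ℕ => k * dexpCoeff lam k) 1).mpr hS.hasSum
  have hrec :
      HasSum (fun k : ℕ => ((k : ℝ) + 1) * dexpCoeff lam (k + 1)) (dexp lam 1 - lam * S) :=
    ((hasSum_dexpCoeff hl).sub (hS.hasSum.mul_left lam)).congr_fun fun k => by
      rw [succ_mul_dexpCoeff_succ]; ring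
  have hlam : 1 + lam ≠ 0 := by linarith [neg_abs_le lam]
  have hSval : S = dexp lam 1 / (1 + lam) := by
    rw [eq_div_iff hlam]
    linarith [hshift.unique hrec]
  exact hSval ▸ hS.hasSum

lemma dtail_one_eq_tsum (n : ℕ) : dtail lam 1 n = ∑' k, dexpCoeff lam (n + k + 1) := by
  have hpartial : ∑ k ∈ range (n + 1), dff lam 1 k * 1 ^ k / k.factorial =
      ∑ k ∈ range (n + 1), dexpCoeff lam k := by
    simp [dexpCoeff]
  rw [dtail, hpartial, dexp_one_eq_tsum, ← (summable_dexpCoeff hl).sum_add_tsum_nat_add (n + 1),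
    add_sub_cancel_left]
  exact tsum_congr fun k => by rw [add_right_comm, add_comm k, add_assoc]

end

theorem stmt_3 (lam : ℝ) (hl : |lam| < 1) :
    HasSum (fun n : ℕ => dtail lam 1 (n + 1)) (1 - lam / (1 + lam) * dexp lam 1) := by
  have htails : HasSum (dtail lam 1) (dexp lam 1 / (1 + lam)) := by
    have h := hasSum_tsum_nat_add_of_summable_natCast_mul_norm
      (summable_natCast_mul_norm_dexpCoeff hl)
    simpa only [nsmul_eq_mul, (hasSum_natCast_mul_dexpCoeff hl).tsum_eq,
      ← dtail_one_eq_tsum hl] using h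
  have hzero : dtail lam 1 0 = dexp lam 1 - 1 := by simp [dtail, dff]
  have h := (hasSum_nat_add_iff' 1).mpr htails
  rw [sum_range_one, hzero] at h
  have hlam : 1 + lam ≠ 0 := by linarith [neg_abs_le lam]
  have hvalue : dexp lam 1 / (1 + lam) - (dexp lam 1 - 1) = 1 - lam / (1 + lam) * dexp lam 1 := by
    field_simp
    ring
  rwa [hvalue] at h
end
end

section
/- For every natural number p, every real λ, and every real y with |λy| < 1, one has Σ_{n=0}^∞ C(n,p) T_n(y) = (y^{p+1}/(p+1)!) (1)_{p+1,λ} (1+λy)^{−(p+1)} e_λ(y), where C(n,p) is the binomial coefficient and the series on the left converges. -/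
noncomputable section

/-!
Write `a_k = (1)_{k,λ} y^k / k!`. All series involved converge absolutely (consecutive terms
have ratio tending to `-λy`), so exchanging the order of summation and the hockey-stick identity
`∑_{n<k} C(n,p) = C(k,p+1)` give `∑_n C(n,p) T_n(y) = ∑_k C(k,p+1) a_k`. Splitting
`(1)_{k,λ} = (1)_{p+1,λ} (1-(p+1)λ)_{k-p-1,λ}` turns this into
`y^{p+1}/(p+1)! · (1)_{p+1,λ} · S(1-(p+1)λ)`, where `S(x) = ∑_m (x)_{m,λ} y^m / m!`.
Finally `S(x) = (1+λy) S(x-λ)`, because `(x)_{m+1,λ} = (x-λ)_{m+1,λ} + (m+1)λ (x-λ)_{m,λ}`,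
so `e_λ(y) = S(1) = (1+λy)^{p+1} S(1-(p+1)λ)`.
-/

open Finset Filter Topology

lemma dff_succ (lam x : ℝ) (n : ℕ) : dff lam x (n + 1) = dff lam x n * (x - n * lam) :=
  prod_range_succ _ _

lemma dff_add (lam x : ℝ) (m n : ℕ) :
    dff lam x (m + n) = dff lam x m * dff lam (x - m * lam) n := by
  rw [dff, prod_range_add, dff, dff]
  congr 1
  refine prod_congr rfl fun i _ => ?_
  push_cast
  ring

lemma dff_succ' (lam x : ℝ) (n : ℕ) : dff lam x (n + 1) = x * dff lam (x - lam) n := by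
  rw [add_comm, dff_add]
  simp [dff]

/-- The `m`-th term of `S(x) = ∑_m (x)_{m,λ} y^m / m!`; `dexp lam y` is the sum for `x = 1`. -/
def dexpTerm (lam x y : ℝ) (m : ℕ) : ℝ := dff lam x m * y ^ m / m.factorial

lemma dexpTerm_zero (lam x y : ℝ) : dexpTerm lam x y 0 = 1 := by
  simp [dexpTerm, dff]

lemma dexpTerm_succ (lam x y : ℝ) (m : ℕ) :
    dexpTerm lam x y (m + 1) = dexpTerm lam x y m * ((x - m * lam) * y / (m + 1)) := by
  simp only [dexpTerm, dff_succ, pow_succ, Nat.factorial_succ]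
  push_cast
  field_simp

lemma tendsto_dexpTerm_ratio (lam x y : ℝ) :
    Tendsto (fun m : ℕ => (x - m * lam) * y / (m + 1)) atTop (𝓝 (-(lam * y))) := by
  have h : Tendsto (fun m : ℕ => (x + lam) * y * (1 / ((m : ℝ) + 1)) - lam * y) atTop
      (𝓝 ((x + lam) * y * 0 - lam * y)) :=
    (tendsto_one_div_add_atTop_nhds_zero_nat.const_mul _).sub_const _
  rw [mul_zero, zero_sub] at h
  refine h.congr fun m => ?_
  field_simp
  ring

lemma summable_dexpTerm (lam x : ℝ) {y : ℝ} (hy : |lam * y| < 1) :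
    Summable (dexpTerm lam x y) := by
  obtain ⟨r, hr, hr1⟩ := exists_between hy
  refine summable_of_ratio_norm_eventually_le hr1 ?_
  have hratio : ∀ᶠ m : ℕ in atTop, ‖(x - m * lam) * y / (m + 1)‖ ≤ r := by
    refine ((tendsto_dexpTerm_ratio lam x y).norm.eventually (ge_mem_nhds ?_))
    rwa [norm_neg, Real.norm_eq_abs]
  filter_upwards [hratio] with m hm
  rw [dexpTerm_succ, norm_mul, mul_comm]
  exact mul_le_mul_of_nonneg_right hm (norm_nonneg _)

lemma dexpTerm_succ_eq_add (lam x y : ℝ) (m : ℕ) :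
    dexpTerm lam x y (m + 1) =
      dexpTerm lam (x - lam) y (m + 1) + lam * y * dexpTerm lam (x - lam) y m := by
  rw [dexpTerm_succ (x := x - lam)]
  simp only [dexpTerm, dff_succ']
  rw [pow_succ, Nat.factorial_succ]
  push_cast
  field_simp
  ring

lemma hasSum_dexpTerm (lam x : ℝ) {y : ℝ} (hy : |lam * y| < 1) :
    HasSum (dexpTerm lam x y) ((1 + lam * y) * ∑' m, dexpTerm lam (x - lam) y m) := by
  have h := (summable_dexpTerm lam (x - lam) hy).hasSum
  rw [← hasSum_nat_add_iff' 1]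
  have hshift := ((hasSum_nat_add_iff' 1).2 h).add (h.mul_left (lam * y))
  convert hshift using 1
  · exact funext (dexpTerm_succ_eq_add lam x y)
  · rw [sum_range_one, sum_range_one, dexpTerm_zero, dexpTerm_zero]
    ring

lemma tsum_dexpTerm_eq_pow_mul (lam x : ℝ) {y : ℝ} (hy : |lam * y| < 1) (k : ℕ) :
    ∑' m, dexpTerm lam x y m = (1 + lam * y) ^ k * ∑' m, dexpTerm lam (x - k * lam) y m := by
  induction k with
  | zero => simp
  | succ k ih =>
    rw [ih, (hasSum_dexpTerm lam _ hy).tsum_eq, pow_succ, mul_assoc]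
    push_cast
    ring_nf

lemma choose_mul_dexpTerm_add (lam x y : ℝ) (q m : ℕ) :
    ((m + q).choose q : ℝ) * dexpTerm lam x y (m + q) =
      y ^ q / q.factorial * dff lam x q * dexpTerm lam (x - q * lam) y m := by
  have hfac : ((m + q).choose q : ℝ) * m.factorial * q.factorial = (m + q).factorial := by
    exact_mod_cast Nat.add_choose_mul_factorial_mul_factorial m q
  have hchoose : ((m + q).choose q : ℝ) ≠ 0 := by
    exact_mod_cast (Nat.choose_pos (Nat.le_add_left q m)).ne'
  have hdff : dff lam x (m + q) = dff lam x q * dff lam (x - q * lam) m := by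
    rw [add_comm, dff_add]
  simp only [dexpTerm]
  rw [hdff, pow_add, ← hfac]
  field_simp

lemma hasSum_choose_mul_dexpTerm (lam x : ℝ) {y : ℝ} (hy : |lam * y| < 1) (q : ℕ) :
    HasSum (fun k => (k.choose q : ℝ) * dexpTerm lam x y k)
      (y ^ q / q.factorial * dff lam x q * ∑' m, dexpTerm lam (x - q * lam) y m) := by
  rw [← hasSum_nat_add_iff' q, sum_eq_zero fun k hk => by
    rw [Nat.choose_eq_zero_of_lt (mem_range.1 hk), Nat.cast_zero, zero_mul], sub_zero]
  simp only [choose_mul_dexpTerm_add]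
  exact (summable_dexpTerm lam _ hy).hasSum.mul_left _

lemma hasSum_mul_tail {w a : ℕ → ℝ} {s : ℝ} (hw : 0 ≤ w) (ha : HasSum a s)
    (hwa : Summable fun k => (∑ n ∈ range k, w n) * a k) :
    HasSum (fun n => w n * (s - ∑ k ∈ range (n + 1), a k))
      (∑' k, (∑ n ∈ range k, w n) * a k) := by
  have hcol : ∀ (b : ℕ → ℝ) k,
      HasSum (fun n => w n * if n < k then b k else 0) ((∑ n ∈ range k, w n) * b k) := by
    intro b k
    have h := hasSum_sum_of_ne_finset_zero (L := SummationFilter.unconditional ℕ)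
      (f := fun n => w n * if n < k then b k else 0) (s := range k)
      fun n hn => by simp [by simpa using hn]
    convert h using 1
    rw [sum_mul]
    exact sum_congr rfl fun n hn => by simp [mem_range.1 hn]
  -- both sides are iterated sums of `U`, which is absolutely summable since `w ≥ 0`
  let U : ℕ × ℕ → ℝ := fun nk => w nk.1 * if nk.1 < nk.2 then a nk.2 else 0
  have habs : Summable fun kn : ℕ × ℕ => |U kn.swap| := by
    have hU : ∀ n k, |U (n, k)| = w n * if n < k then |a k| else 0 := fun n k => by
      simp only [U, abs_mul, abs_of_nonneg (hw n)]
      split_ifs <;> simp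
    refine Summable.congr (f := fun kn => w kn.2 * if kn.2 < kn.1 then |a kn.1| else 0) ?_
      fun kn => (hU _ _).symm
    refine (summable_prod_of_nonneg fun _ => mul_nonneg (hw _) (by split_ifs <;> simp)).2
      ⟨fun k => (hcol (|a ·|) k).summable, hwa.abs.congr fun k => ?_⟩
    rw [(hcol (|a ·|) k).tsum_eq, abs_mul, abs_of_nonneg (sum_nonneg fun n _ => hw n)]
  have hswap : HasSum (U ∘ Equiv.prodComm ℕ ℕ) (∑' k, (∑ n ∈ range k, w n) * a k) := by
    have h := (summable_abs_iff.1 habs).hasSum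
    rwa [(h.prod_fiberwise (hcol a)).tsum_eq]
  have hrow : ∀ n, HasSum (fun k => U (n, k)) (w n * (s - ∑ k ∈ range (n + 1), a k)) := by
    intro n
    refine HasSum.mul_left (w n) ?_
    rw [← hasSum_nat_add_iff' (n + 1)]
    simp only [show ∀ j, n < j + (n + 1) from fun j => by omega, if_true]
    rw [sum_eq_zero fun k hk => if_neg (by simpa [Nat.lt_succ_iff, not_lt] using hk), sub_zero]
    exact (hasSum_nat_add_iff' (n + 1)).2 ha
  exact ((Equiv.prodComm ℕ ℕ).hasSum_iff.1 hswap).prod_fiberwise hrow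

lemma sum_range_choose_eq_choose_add_one (p k : ℕ) :
    ∑ n ∈ range k, n.choose p = k.choose (p + 1) := by
  induction k with
  | zero => simp
  | succ k ih => rw [sum_range_succ, ih, Nat.choose_succ_succ', add_comm]

theorem stmt_5 (p : ℕ) (lam y : ℝ) (hy : |lam * y| < 1) :
    HasSum (fun n : ℕ => (n.choose p : ℝ) * dtail lam y n)
      (y ^ (p + 1) / (p + 1).factorial * dff lam 1 (p + 1) *
        (1 + lam * y) ^ (-(p + 1 : ℤ)) * dexp lam y) := by
  have hpos : 0 < 1 + lam * y := by linarith [neg_abs_le (lam * y)]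
  have hexp : dexp lam y =
      (1 + lam * y) ^ (p + 1) * ∑' m, dexpTerm lam (1 - (p + 1 : ℕ) * lam) y m :=
    tsum_dexpTerm_eq_pow_mul lam 1 hy (p + 1)
  have hweighted : HasSum (fun k => (∑ n ∈ range k, (n.choose p : ℝ)) * dexpTerm lam 1 y k)
      (y ^ (p + 1) / (p + 1).factorial * dff lam 1 (p + 1) *
        (1 + lam * y) ^ (-(p + 1 : ℤ)) * dexp lam y) := by
    simp only [← Nat.cast_sum, sum_range_choose_eq_choose_add_one]
    convert hasSum_choose_mul_dexpTerm lam 1 hy (p + 1) using 1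
    rw [hexp, zpow_neg, ← Nat.cast_succ, zpow_natCast]
    field_simp
  have htail := hasSum_mul_tail (fun n => (n.choose p).cast_nonneg)
    (summable_dexpTerm lam 1 hy).hasSum hweighted.summable
  rwa [hweighted.tsum_eq] at htail
end
end
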